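/- arXiv:0909.1065 — 4 statements merged into one kernel-verified Lean document; each statement's English description precedes it below -/
import Mathlib

section
/- Let (E,∗) be a finite invertible loop with identity e₁, let φ_{p,q} be binary operations on a finite type C such that φ_{p,q} = φ_{q,p} for all p, q ∈ E and such that every (C, φ_{p,q}) is a finite invertible loop with common identity c₁. Then the block product (E × C, ⋄) is a finite invertible loop: it is a finite loop with identity (e₁, c₁) and every element (p, a) ∈ E × C has a two-sided inverse with respect to ⋄. -/
/-- The block product operation on `E × C` determined by `∗` on `E` and the family
`φ_{p,q}` of operations on `C`: `(p,a) ⋄ (q,b) = (p ∗ q, φ_{p,q}(a,b))`. -/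
def blockProd {E C : Type*} (op : E → E → E) (phi : E → E → C → C → C)
    (z w : E × C) : E × C :=
  (op z.1 w.1, phi z.1 w.1 z.2 w.2)

/-- If `(E,∗)` is a finite invertible loop with identity `e₁`, the family
`φ_{p,q}` is symmetric (`φ_{p,q} = φ_{q,p}`) and every `(C, φ_{p,q})` is a finite
invertible loop with common identity `c₁`, then the block product `(E × C, ⋄)` is a
finite invertible loop with identity `(e₁, c₁)`. -/
theorem blockProd_invertible_loop
    {E C : Type*} [Fintype E] [Fintype C]
    (op : E → E → E) (phi : E → E → C → C → C) (e₁ : E) (c₁ : C)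
    (hEleft : ∀ a : E, Function.Bijective (fun x => op a x))
    (hEright : ∀ a : E, Function.Bijective (fun x => op x a))
    (hEone : ∀ x : E, op e₁ x = x ∧ op x e₁ = x)
    (hEinv : ∀ p : E, ∃ q : E, op p q = e₁ ∧ op q p = e₁)
    (hsymm : ∀ p q : E, phi p q = phi q p)
    (hCleft : ∀ p q : E, ∀ a : C, Function.Bijective (fun x => phi p q a x))
    (hCright : ∀ p q : E, ∀ a : C, Function.Bijective (fun x => phi p q x a))
    (hCone : ∀ p q : E, ∀ x : C, phi p q c₁ x = x ∧ phi p q x c₁ = x)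
    (hCinv : ∀ p q : E, ∀ a : C, ∃ b : C, phi p q a b = c₁ ∧ phi p q b a = c₁) :
    (∀ z : E × C, Function.Bijective (fun w => blockProd op phi z w)) ∧
    (∀ z : E × C, Function.Bijective (fun w => blockProd op phi w z)) ∧
    (∀ z : E × C, blockProd op phi (e₁, c₁) z = z ∧ blockProd op phi z (e₁, c₁) = z) ∧
    (∀ z : E × C, ∃ w : E × C,
        blockProd op phi z w = (e₁, c₁) ∧ blockProd op phi w z = (e₁, c₁)) := by
  refine ⟨?_, ?_, ?_, ?_⟩
  · intro z
    apply Finite.injective_iff_bijective.mp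
    rintro ⟨q, b⟩ ⟨q', b'⟩ h
    simp only [blockProd, Prod.mk.injEq] at h
    obtain ⟨h1, h2⟩ := h
    have hq : q = q' := (hEleft z.1).1 h1
    subst hq
    exact Prod.ext rfl ((hCleft z.1 q z.2).1 h2)
  · intro z
    apply Finite.injective_iff_bijective.mp
    rintro ⟨q, b⟩ ⟨q', b'⟩ h
    simp only [blockProd, Prod.mk.injEq] at h
    obtain ⟨h1, h2⟩ := h
    have hq : q = q' := (hEright z.1).1 h1
    subst hq
    exact Prod.ext rfl ((hCright q z.1 z.2).1 h2)
  · intro z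
    constructor <;> simp [blockProd, (hEone z.1).1, (hEone z.1).2,
      (hCone e₁ z.1 z.2).1, (hCone z.1 e₁ z.2).2]
  · rintro ⟨p, a⟩
    obtain ⟨q, hq1, hq2⟩ := hEinv p
    obtain ⟨b, hb1, hb2⟩ := hCinv p q a
    exact ⟨(q, b), by simp [blockProd, hq1, hb1],
      by simp [blockProd, hq2, hsymm q p, hb2]⟩
end

section
/- Let (L,⋆) be a finite loop with identity 1 and let ~ be a congruence on (L,⋆); let H denote the congruence class of 1 and let E = L/~ denote the finite quotient set. Then there exist a binary operation ∗ on E making (E,∗) a finite loop, a family of binary operations φ_{P,Q} on H indexed by pairs (P,Q) ∈ E × E such that every (H, φ_{P,Q}) is a finite quasigroup, and a bijection θ : L → E × H such that θ(x ⋆ y) = θ(x) ⋄ θ(y) for all x, y ∈ L, where ⋄ is the block product on E × H determined by ∗ and the family φ. In other words, every finite loop with a normal subloop is isomorphic to a coset (block) product. -/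
/-- Auxiliary: the unique `h` with `op (Quot.mk r x).out h = x`. -/
noncomputable def lwPsi {L : Type*} (op : L → L → L) (r : L → L → Prop)
    (hleft : ∀ a : L, Function.Bijective (fun x => op a x)) (x : L) : L :=
  (Equiv.ofBijective _ (hleft (Quot.mk r x).out)).symm x

lemma lwPsi_spec {L : Type*} (op : L → L → L) (r : L → L → Prop)
    (hleft : ∀ a : L, Function.Bijective (fun x => op a x)) (x : L) :
    op (Quot.mk r x).out (lwPsi op r hleft x) = x := by
  exact Equiv.apply_symm_apply (Equiv.ofBijective _ (hleft (Quot.mk r x).out)) x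

/-- Every finite loop `(L,⋆)` with a congruence `~` (equivalently, a
normal subloop `H`, the class of the identity) is isomorphic to a coset (block)
product: there are a finite loop structure `∗` on the quotient `E = L/~`, a family of
quasigroup operations `φ_{P,Q}` on `H`, and a bijection `θ : L ≃ E × H` with
`θ(x ⋆ y) = θ(x) ⋄ θ(y)`. -/
theorem loop_with_congruence_is_coset_product
    {L : Type*} [Fintype L] (op : L → L → L) (one : L)
    (hleft : ∀ a : L, Function.Bijective (fun x => op a x))
    (hright : ∀ a : L, Function.Bijective (fun x => op x a))
    (hone : ∀ x : L, op one x = x ∧ op x one = x)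
    (r : L → L → Prop) (hequiv : Equivalence r)
    (hcong : ∀ x x' y y' : L, r x x' → r y y' → r (op x y) (op x' y')) :
    ∃ (star : Quot r → Quot r → Quot r)
      (phi : Quot r → Quot r → {x : L // r x one} → {x : L // r x one} → {x : L // r x one})
      (θ : L ≃ Quot r × {x : L // r x one}),
      (∀ a : Quot r, Function.Bijective (fun x => star a x)) ∧
      (∀ a : Quot r, Function.Bijective (fun x => star x a)) ∧
      (∀ P : Quot r, star (Quot.mk r one) P = P ∧ star P (Quot.mk r one) = P) ∧
      (∀ P Q : Quot r,
        (∀ a : {x : L // r x one}, Function.Bijective (fun x => phi P Q a x)) ∧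
        (∀ a : {x : L // r x one}, Function.Bijective (fun x => phi P Q x a))) ∧
      (∀ x y : L, θ (op x y) = blockProd star phi (θ x) (θ y)) := by
  classical
  -- basic facts about the quotient
  have meq : ∀ x y : L, Quot.mk r x = Quot.mk r y ↔ r x y := by
    intro x y; rw [Quot.eq]; exact hequiv.eqvGen_iff
  have hrel : ∀ x : L, r x (Quot.mk r x).out := by
    intro x
    have := (Quot.out_eq (Quot.mk r x)).symm
    exact (meq x _).mp this
  have hEfin : Finite (Quot r) := Finite.of_surjective (Quot.mk r) Quot.mk_surjective
  -- quotient left cancellation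
  have qlcancel : ∀ a x y : L, r (op a x) (op a y) → r x y := by
    intro a x y h
    have Fsurj : Function.Surjective
        (Quot.map (fun z => op a z) (fun u v h => hcong a a u v (hequiv.refl a) h)
          : Quot r → Quot r) := by
      rintro ⟨q⟩
      obtain ⟨x0, hx0⟩ := (hleft a).2 q
      exact ⟨Quot.mk r x0, by simpa [Quot.map] using congrArg (Quot.mk r) hx0⟩
    have Finj := (Finite.surjective_iff_bijective.mp Fsurj).1
    have : Quot.mk r (op a x) = Quot.mk r (op a y) := (meq _ _).mpr h
    have : Quot.mk r x = Quot.mk r y := Finj (by simpa [Quot.map] using this)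
    exact (meq x y).mp this
  set psi : L → L := lwPsi op r hleft with hpsi
  have psi_spec : ∀ x : L, op (Quot.mk r x).out (psi x) = x := lwPsi_spec op r hleft
  have hH : ∀ x : L, r (psi x) one := by
    intro x
    apply qlcancel (Quot.mk r x).out
    rw [psi_spec x, (hone (Quot.mk r x).out).2]
    exact hrel x
  -- injectivity of psi on a fixed class
  have psi_inj : ∀ z z' : L, Quot.mk r z = Quot.mk r z' → psi z = psi z' → z = z' := by
    intro z z' hq hp
    have := psi_spec z
    rw [hq, hp, psi_spec z'] at this
    exact this.symm
  set star : Quot r → Quot r → Quot r := fun P Q => Quot.mk r (op P.out Q.out) with hstar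
  have starmk : ∀ x y : L, star (Quot.mk r x) (Quot.mk r y) = Quot.mk r (op x y) := by
    intro x y
    exact (meq _ _).mpr (hcong _ _ _ _ (hequiv.symm (hrel x)) (hequiv.symm (hrel y)))
  -- class of op P.out h for h ~ one
  have hclass : ∀ (P : Quot r) (h : L), r h one → Quot.mk r (op P.out h) = P := by
    intro P h hh
    have : r (op P.out h) P.out := by
      have := hcong P.out P.out h one (hequiv.refl _) hh
      rwa [(hone P.out).2] at this
    rw [(meq _ _).mpr this, Quot.out_eq]
  refine ⟨star, fun P Q a b => ⟨psi (op (op P.out a.1) (op Q.out b.1)), hH _⟩,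
    ⟨fun x => (Quot.mk r x, ⟨psi x, hH x⟩), fun Ph => op Ph.1.out Ph.2.1, ?_, ?_⟩,
    ?_, ?_, ?_, ?_, ?_⟩
  · intro x
    simpa using psi_spec x
  · rintro ⟨P, h, hh⟩
    have h1 : Quot.mk r (op P.out h) = P := hclass P h hh
    refine Prod.ext h1 (Subtype.ext ?_)
    have := psi_spec (op P.out h)
    rw [h1] at this
    exact (hleft P.out).1 this
  · -- star left translations bijective
    intro A
    apply Finite.surjective_iff_bijective.mp
    intro Q
    obtain ⟨x, hx⟩ := (hleft A.out).2 Q.out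
    refine ⟨Quot.mk r x, ?_⟩
    have hx' : op A.out x = Q.out := hx
    simp only
    rw [← Quot.out_eq A, starmk, hx', Quot.out_eq]
  · intro A
    apply Finite.surjective_iff_bijective.mp
    intro Q
    obtain ⟨x, hx⟩ := (hright A.out).2 Q.out
    refine ⟨Quot.mk r x, ?_⟩
    have hx' : op x A.out = Q.out := hx
    simp only
    rw [← Quot.out_eq A, starmk, hx', Quot.out_eq]
  · -- identity in the quotient
    intro P
    constructor
    · rw [← Quot.out_eq P, starmk, (hone P.out).1]
    · rw [← Quot.out_eq P, starmk, (hone P.out).2]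
  · -- phi quasigroup
    intro P Q
    have key : ∀ (a b a' b' : {x : L // r x one}),
        psi (op (op P.out a.1) (op Q.out b.1)) = psi (op (op P.out a'.1) (op Q.out b'.1)) →
        op (op P.out a.1) (op Q.out b.1) = op (op P.out a'.1) (op Q.out b'.1) := by
      intro a b a' b' hp
      apply psi_inj _ _ _ hp
      have c1 : r (op P.out a.1) (op P.out a'.1) := by
        have h1 := hcong P.out P.out a.1 one (hequiv.refl _) a.2
        have h2 := hcong P.out P.out a'.1 one (hequiv.refl _) a'.2
        exact hequiv.trans h1 (hequiv.symm h2)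
      have c2 : r (op Q.out b.1) (op Q.out b'.1) := by
        have h1 := hcong Q.out Q.out b.1 one (hequiv.refl _) b.2
        have h2 := hcong Q.out Q.out b'.1 one (hequiv.refl _) b'.2
        exact hequiv.trans h1 (hequiv.symm h2)
      exact (meq _ _).mpr (hcong _ _ _ _ c1 c2)
    constructor
    · intro a
      apply Finite.injective_iff_bijective.mp
      intro b b' hb
      have hp : psi (op (op P.out a.1) (op Q.out b.1))
          = psi (op (op P.out a.1) (op Q.out b'.1)) := congrArg Subtype.val hb
      have := key a b a b' hp
      have := (hleft (op P.out a.1)).1 this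
      exact Subtype.ext ((hleft Q.out).1 this)
    · intro b
      apply Finite.injective_iff_bijective.mp
      intro a a' ha
      have hp : psi (op (op P.out a.1) (op Q.out b.1))
          = psi (op (op P.out a'.1) (op Q.out b.1)) := congrArg Subtype.val ha
      have := key a b a' b hp
      have := (hright (op Q.out b.1)).1 this
      exact Subtype.ext ((hleft P.out).1 this)
  · -- the isomorphism equation
    intro x y
    simp only [blockProd, Equiv.coe_fn_mk]
    refine Prod.ext ?_ (Subtype.ext ?_)
    · exact (starmk x y).symm
    · simp only
      rw [psi_spec x, psi_spec y]
end

section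
/- Let (L,⋆) be a finite loop with identity 1 and let Z be its center. Then the relation x ~ y defined by x ∈ y ⋆ Z (i.e. x = y ⋆ z for some z ∈ Z) is a congruence on (L,⋆) whose class of the identity is Z. Consequently, if Z is nontrivial then (L,⋆) is a coset product: there exist a finite loop structure ∗ on the quotient E = L/~, a family of quasigroup operations φ_{P,Q} on Z indexed by pairs (P,Q) ∈ E × E, and a bijection θ : L → E × Z with θ(x ⋆ y) = θ(x) ⋄ θ(y) for all x, y ∈ L, where ⋄ is the associated block product. -/
/-- Auxiliary: the centrality predicate. -/
def IsCentralAux {L : Type*} (op : L → L → L) (a : L) : Prop :=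
  (∀ x : L, op a x = op x a) ∧
  (∀ x y : L, op a (op x y) = op (op a x) y) ∧
  (∀ x y : L, op x (op a y) = op (op x a) y) ∧
  (∀ x y : L, op (op x y) a = op x (op y a))

lemma isCentralAux_one {L : Type*} (op : L → L → L) (one : L)
    (hone : ∀ x : L, op one x = x ∧ op x one = x) : IsCentralAux op one := by
  refine ⟨fun x => by rw [(hone x).1, (hone x).2], fun x y => ?_, fun x y => ?_, fun x y => ?_⟩
  · rw [(hone (op x y)).1, (hone x).1]
  · rw [(hone y).1, (hone x).2]
  · rw [(hone (op x y)).2, (hone y).2]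

lemma isCentralAux_mul {L : Type*} {op : L → L → L} {a b : L}
    (ha : IsCentralAux op a) (hb : IsCentralAux op b) : IsCentralAux op (op a b) := by
  obtain ⟨ca, a1, a2, a3⟩ := ha
  obtain ⟨cb, b1, b2, b3⟩ := hb
  refine ⟨fun x => ?_, fun x y => ?_, fun x y => ?_, fun x y => ?_⟩
  · calc op (op a b) x = op a (op b x) := (a1 b x).symm
      _ = op a (op x b) := by rw [cb x]
      _ = op (op a x) b := a1 x b
      _ = op (op x a) b := by rw [ca x]
      _ = op x (op a b) := (a2 x b).symm
  · calc op (op a b) (op x y) = op a (op b (op x y)) := (a1 _ _).symm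
      _ = op a (op (op b x) y) := by rw [b1 x y]
      _ = op (op a (op b x)) y := a1 _ _
      _ = op (op (op a b) x) y := by rw [a1 b x]
  · calc op x (op (op a b) y) = op x (op a (op b y)) := by rw [a1 b y]
      _ = op (op x a) (op b y) := a2 _ _
      _ = op (op (op x a) b) y := b2 _ _
      _ = op (op x (op a b)) y := by rw [a2 x b]
  · calc op (op x y) (op a b) = op (op (op x y) a) b := a2 _ _
      _ = op (op x (op y a)) b := by rw [a3 x y]
      _ = op x (op (op y a) b) := b3 _ _
      _ = op x (op y (op a b)) := by rw [a2 y b]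

lemma isCentralAux_inv {L : Type*} {op : L → L → L} {a one : L}
    (hleft : ∀ a : L, Function.Bijective (fun x => op a x))
    (hright : ∀ a : L, Function.Bijective (fun x => op x a))
    (hone : ∀ x : L, op one x = x ∧ op x one = x)
    (ha : IsCentralAux op a) :
    ∃ b : L, IsCentralAux op b ∧ op a b = one ∧ op b a = one := by
  obtain ⟨ca, a1, a2, a3⟩ := ha
  obtain ⟨b, hb⟩ := (hright a).2 one
  simp only at hb
  have hab : op a b = one := by rw [ca b]; exact hb
  have lcan : ∀ x y : L, op a x = op a y → x = y := fun x y h => (hleft a).1 h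
  have cb : ∀ x : L, op b x = op x b := by
    intro x
    apply lcan
    calc op a (op b x) = op (op a b) x := a1 b x
      _ = x := by rw [hab, (hone x).1]
      _ = op x one := (hone x).2.symm
      _ = op x (op a b) := by rw [hab]
      _ = op (op x a) b := a2 x b
      _ = op (op a x) b := by rw [ca x]
      _ = op a (op x b) := (a1 x b).symm
  have b1 : ∀ x y : L, op b (op x y) = op (op b x) y := by
    intro x y
    apply lcan
    calc op a (op b (op x y)) = op (op a b) (op x y) := a1 _ _
      _ = op x y := by rw [hab, (hone _).1]
      _ = op (op (op a b) x) y := by rw [hab, (hone x).1]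
      _ = op (op a (op b x)) y := by rw [a1 b x]
      _ = op a (op (op b x) y) := (a1 _ _).symm
  have key : ∀ x : L, op a (op x b) = x := by
    intro x
    calc op a (op x b) = op (op a x) b := a1 x b
      _ = op (op x a) b := by rw [ca x]
      _ = op x (op a b) := (a2 x b).symm
      _ = x := by rw [hab, (hone x).2]
  have b2 : ∀ x y : L, op x (op b y) = op (op x b) y := by
    intro x y
    apply lcan
    have h1 : op a (op x (op b y)) = op x y := by
      calc op a (op x (op b y)) = op (op x (op b y)) a := ca _
        _ = op x (op (op b y) a) := a3 _ _
        _ = op x (op b (op y a)) := by rw [a3 b y]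
        _ = op x (op (op y a) b) := by rw [cb (op y a)]
        _ = op x (op y (op a b)) := by rw [a2 y b]
        _ = op x y := by rw [hab, (hone y).2]
    have h2 : op a (op (op x b) y) = op x y := by
      calc op a (op (op x b) y) = op (op a (op x b)) y := a1 _ _
        _ = op x y := by rw [key x]
    rw [h1, h2]
  have b3 : ∀ x y : L, op (op x y) b = op x (op y b) := by
    intro x y
    apply lcan
    have hba : op b a = one := hb
    have h1 : op a (op (op x y) b) = op x y := by
      calc op a (op (op x y) b) = op (op (op x y) b) a := ca _
        _ = op (op x y) (op b a) := a3 _ _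
        _ = op x y := by rw [hba, (hone _).2]
    have h2 : op a (op x (op y b)) = op x y := by
      calc op a (op x (op y b)) = op (op x (op y b)) a := ca _
        _ = op x (op (op y b) a) := a3 _ _
        _ = op x (op y (op b a)) := by rw [a3 y b]
        _ = op x y := by rw [hba, (hone y).2]
    rw [h1, h2]
  exact ⟨b, ⟨cb, b1, b2, b3⟩, hab, hb⟩

/-- For a finite loop `(L,⋆)` with identity `1` and center `Z`, the
relation `x ~ y ↔ x ∈ y ⋆ Z` is a congruence whose class of the identity is `Z`.
Consequently, if `Z` is nontrivial then `(L,⋆)` is a coset product: there are a finite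
loop structure on the quotient `E = L/~`, a family of quasigroup operations on `Z`,
and a multiplicative bijection `θ : L ≃ E × Z` onto the associated block product. -/
theorem loop_with_nontrivial_center_is_coset_product
    {L : Type*} [Fintype L] (op : L → L → L) (one : L)
    (hleft : ∀ a : L, Function.Bijective (fun x => op a x))
    (hright : ∀ a : L, Function.Bijective (fun x => op x a))
    (hone : ∀ x : L, op one x = x ∧ op x one = x)
    (Z : Set L)
    (hZ : Z = {a : L | (∀ x : L, op a x = op x a) ∧
                       (∀ x y : L, op a (op x y) = op (op a x) y) ∧
                       (∀ x y : L, op x (op a y) = op (op x a) y) ∧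
                       (∀ x y : L, op (op x y) a = op x (op y a))})
    (rel : L → L → Prop)
    (hrel : ∀ x y : L, rel x y ↔ ∃ z ∈ Z, x = op y z) :
    (Equivalence rel ∧
     (∀ x x' y y' : L, rel x x' → rel y y' → rel (op x y) (op x' y')) ∧
     {x : L | rel x one} = Z) ∧
    ((∃ z ∈ Z, z ≠ one) →
      ∃ (star : Quot rel → Quot rel → Quot rel)
        (phi : Quot rel → Quot rel → ↥Z → ↥Z → ↥Z)
        (θ : L ≃ Quot rel × ↥Z),
        (∀ a : Quot rel, Function.Bijective (fun x => star a x)) ∧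
        (∀ a : Quot rel, Function.Bijective (fun x => star x a)) ∧
        (∀ P : Quot rel, star (Quot.mk rel one) P = P ∧ star P (Quot.mk rel one) = P) ∧
        (∀ P Q : Quot rel,
          (∀ a : ↥Z, Function.Bijective (fun x => phi P Q a x)) ∧
          (∀ a : ↥Z, Function.Bijective (fun x => phi P Q x a))) ∧
        (∀ x y : L, θ (op x y) = blockProd star phi (θ x) (θ y))) := by
  classical
  have hZmem : ∀ a : L, a ∈ Z ↔ IsCentralAux op a := by
    intro a; rw [hZ]; exact Iff.rfl
  have hone_mem : one ∈ Z := (hZmem one).2 (isCentralAux_one op one hone)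
  have hmul_mem : ∀ {a b : L}, a ∈ Z → b ∈ Z → op a b ∈ Z := fun ha hb =>
    (hZmem _).2 (isCentralAux_mul ((hZmem _).1 ha) ((hZmem _).1 hb))
  -- equivalence
  have hrefl : ∀ x, rel x x := fun x =>
    (hrel x x).2 ⟨one, hone_mem, (hone x).2.symm⟩
  have hsymm : ∀ {x y}, rel x y → rel y x := by
    intro x y hxy
    obtain ⟨z, hzZ, hz⟩ := (hrel x y).1 hxy
    obtain ⟨b, hbC, hzb, hbz⟩ := isCentralAux_inv hleft hright hone ((hZmem z).1 hzZ)
    refine (hrel y x).2 ⟨b, (hZmem b).2 hbC, ?_⟩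
    rw [hz, hbC.2.2.2 y z, hzb, (hone y).2]
  have htrans : ∀ {x y w}, rel x y → rel y w → rel x w := by
    intro x y w hxy hyw
    obtain ⟨z, hzZ, hz⟩ := (hrel x y).1 hxy
    obtain ⟨z', hz'Z, hz'⟩ := (hrel y w).1 hyw
    refine (hrel x w).2 ⟨op z' z, hmul_mem hz'Z hzZ, ?_⟩
    rw [hz, hz', ((hZmem z).1 hzZ).2.2.2 w z']
  have hequiv : Equivalence rel := ⟨hrefl, hsymm, htrans⟩
  -- congruence
  have hcong : ∀ x x' y y' : L, rel x x' → rel y y' → rel (op x y) (op x' y') := by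
    intro x x' y y' hx hy
    obtain ⟨z, hzZ, hz⟩ := (hrel x x').1 hx
    obtain ⟨w, hwZ, hw⟩ := (hrel y y').1 hy
    obtain ⟨cz, z1, z2, z3⟩ := (hZmem z).1 hzZ
    have hzwZ := hmul_mem hzZ hwZ
    refine (hrel _ _).2 ⟨op z w, hzwZ, ?_⟩
    calc op x y = op (op x' z) (op y' w) := by rw [hz, hw]
      _ = op x' (op z (op y' w)) := (z2 x' (op y' w)).symm
      _ = op x' (op (op z y') w) := by rw [z1 y' w]
      _ = op x' (op (op y' z) w) := by rw [cz y']
      _ = op x' (op y' (op z w)) := by rw [z2 y' w]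
      _ = op (op x' y') (op z w) := (((hZmem _).1 hzwZ).2.2.2 x' y').symm
  -- class of one
  have hclass : {x : L | rel x one} = Z := by
    ext x
    simp only [Set.mem_setOf_eq]
    constructor
    · intro hx
      obtain ⟨z, hzZ, hz⟩ := (hrel x one).1 hx
      rwa [hz, (hone z).1]
    · intro hx
      exact (hrel x one).2 ⟨x, hx, ((hone x).1).symm⟩
  refine ⟨⟨hequiv, hcong, hclass⟩, fun _ => ?_⟩
  -- Part 2
  have mk_eq : ∀ a b : L, Quot.mk rel a = Quot.mk rel b ↔ rel a b :=
    fun a b => hequiv.quot_mk_eq_iff a b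
  have out_rel : ∀ x : L, rel x (Quot.mk rel x).out := fun x =>
    hequiv.symm ((mk_eq _ _).1 (Quot.out_eq (Quot.mk rel x)))
  have hex : ∀ x : L, ∃ z : L, z ∈ Z ∧ x = op (Quot.mk rel x).out z := by
    intro x
    obtain ⟨z, hzZ, hz⟩ := (hrel _ _).1 (out_rel x)
    exact ⟨z, hzZ, hz⟩
  choose zc hzcZ hzceq using hex
  set star : Quot rel → Quot rel → Quot rel :=
    fun P Q => Quot.mk rel (op P.out Q.out) with hstar
  have mk_op : ∀ x y : L, Quot.mk rel (op x y) = star (Quot.mk rel x) (Quot.mk rel y) :=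
    fun x y => (mk_eq _ _).2 (hcong _ _ _ _ (out_rel x) (out_rel y))
  set phi : Quot rel → Quot rel → ↥Z → ↥Z → ↥Z :=
    fun P Q a b => ⟨op (zc (op P.out Q.out)) (op a b),
      hmul_mem (hzcZ _) (hmul_mem a.2 b.2)⟩ with hphi
  -- theta
  set f : L → Quot rel × ↥Z := fun x => (Quot.mk rel x, ⟨zc x, hzcZ x⟩) with hf
  set g : Quot rel × ↥Z → L := fun p => op p.1.out p.2 with hg
  have hPfix : ∀ (P : Quot rel) (z : ↥Z), Quot.mk rel (op P.out (z : L)) = P := by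
    intro P z
    have : rel (op P.out (z : L)) P.out := (hrel _ _).2 ⟨z, z.2, rfl⟩
    rw [(mk_eq _ _).2 this, Quot.out_eq]
  have hgf : ∀ x, g (f x) = x := fun x => (hzceq x).symm
  have hfg : ∀ p, f (g p) = p := by
    rintro ⟨P, z⟩
    have h1 : Quot.mk rel (op P.out (z : L)) = P := hPfix P z
    have h2 : zc (op P.out (z : L)) = z := by
      have := hzceq (op P.out (z : L))
      rw [h1] at this
      exact ((hleft P.out).1 this.symm)
    simp only [hf, hg]
    exact Prod.ext h1 (Subtype.ext h2)
  have hbij : Function.Bijective f :=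
    Function.bijective_iff_has_inverse.2 ⟨g, hgf, hfg⟩
  refine ⟨star, phi, Equiv.ofBijective f hbij, ?_, ?_, ?_, ?_, ?_⟩
  · -- left translations on the quotient
    intro P
    rw [← Finite.surjective_iff_bijective]
    intro R
    obtain ⟨y, hy⟩ := (hleft P.out).2 R.out
    simp only at hy
    refine ⟨Quot.mk rel y, ?_⟩
    show Quot.mk rel (op P.out (Quot.mk rel y).out) = R
    have : rel (op P.out (Quot.mk rel y).out) (op P.out y) :=
      hcong _ _ _ _ (hrefl P.out) (hsymm (out_rel y))
    rw [(mk_eq _ _).2 this, hy, Quot.out_eq]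
  · intro Q
    rw [← Finite.surjective_iff_bijective]
    intro R
    obtain ⟨y, hy⟩ := (hright Q.out).2 R.out
    simp only at hy
    refine ⟨Quot.mk rel y, ?_⟩
    show Quot.mk rel (op (Quot.mk rel y).out Q.out) = R
    have : rel (op (Quot.mk rel y).out Q.out) (op y Q.out) :=
      hcong _ _ _ _ (hsymm (out_rel y)) (hrefl Q.out)
    rw [(mk_eq _ _).2 this, hy, Quot.out_eq]
  · -- identity on the quotient
    intro P
    have he : (Quot.mk rel one).out ∈ Z := by
      have : rel (Quot.mk rel one).out one := hsymm (out_rel one)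
      obtain ⟨z, hzZ, hz⟩ := (hrel _ _).1 this
      rwa [hz, (hone z).1]
    obtain ⟨ce, _, _, _⟩ := (hZmem _).1 he
    constructor
    · show Quot.mk rel (op (Quot.mk rel one).out P.out) = P
      rw [ce P.out]
      exact hPfix P ⟨_, he⟩
    · show Quot.mk rel (op P.out (Quot.mk rel one).out) = P
      exact hPfix P ⟨_, he⟩
  · -- phi translations bijective
    intro P Q
    set c := zc (op P.out Q.out) with hc
    constructor
    · intro a
      rw [← Finite.injective_iff_bijective]
      intro u v huv
      have h : op c (op (a : L) u) = op c (op (a : L) v) := by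
        simpa [hphi, Subtype.ext_iff] using huv
      exact Subtype.ext ((hleft (a : L)).1 ((hleft c).1 h))
    · intro a
      rw [← Finite.injective_iff_bijective]
      intro u v huv
      have h : op c (op (u : L) a) = op c (op (v : L) a) := by
        simpa [hphi, Subtype.ext_iff] using huv
      exact Subtype.ext ((hright (a : L)).1 ((hleft c).1 h))
  · -- multiplicativity
    intro x y
    have key : op x y =
        op (star (Quot.mk rel x) (Quot.mk rel y)).out
          (op (zc (op (Quot.mk rel x).out (Quot.mk rel y).out))
            (op (zc x) (zc y))) := by
      set sP := (Quot.mk rel x).out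
      set sQ := (Quot.mk rel y).out
      set a := zc x
      set b := zc y
      obtain ⟨ca, a1, a2, a3⟩ := (hZmem a).1 (hzcZ x)
      have habZ : op a b ∈ Z := hmul_mem (hzcZ x) (hzcZ y)
      obtain ⟨_, _, _, ab3⟩ := (hZmem _).1 habZ
      set c := zc (op sP sQ)
      obtain ⟨_, _, c2, _⟩ := (hZmem c).1 (hzcZ (op sP sQ))
      have hPQ : op sP sQ = op (star (Quot.mk rel x) (Quot.mk rel y)).out c :=
        hzceq (op sP sQ)
      calc op x y = op (op sP a) (op sQ b) := by rw [← hzceq x, ← hzceq y]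
        _ = op sP (op a (op sQ b)) := (a2 sP (op sQ b)).symm
        _ = op sP (op (op a sQ) b) := by rw [a1 sQ b]
        _ = op sP (op (op sQ a) b) := by rw [ca sQ]
        _ = op sP (op sQ (op a b)) := by rw [a2 sQ b]
        _ = op (op sP sQ) (op a b) := (ab3 sP sQ).symm
        _ = op (op (star (Quot.mk rel x) (Quot.mk rel y)).out c) (op a b) := by rw [← hPQ]
        _ = op (star (Quot.mk rel x) (Quot.mk rel y)).out (op c (op a b)) :=
            (c2 _ _).symm
    show f (op x y) = blockProd star phi (f x) (f y)
    have h1 : Quot.mk rel (op x y) = star (Quot.mk rel x) (Quot.mk rel y) := mk_op x y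
    have h2 : zc (op x y) =
        op (zc (op (Quot.mk rel x).out (Quot.mk rel y).out)) (op (zc x) (zc y)) := by
      have hx := hzceq (op x y)
      rw [h1] at hx
      exact (hleft _).1 (hx.symm.trans key)
    simp only [hf, blockProd, hphi]
    exact Prod.ext h1 (Subtype.ext h2)
end

section
/- Let (E,∗) and (C,φ) be composite finite invertible loops of prime orders k and m respectively: E has a closed subset Ē with 1 < |Ē| < k and C has a closed subset C̄ with 1 < |C̄| < m. Then the direct product (E × C, ⋄), a finite invertible loop of order n = k·m, is non-Lagrangian: the subset Ē × C̄ is closed under ⋄ and its cardinality |Ē|·|C̄| does not divide n. -/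
/-- The direct product operation on `E × C` determined by `∗` on `E` and `φ` on `C`:
`(p,a) ⋄ (q,b) = (p ∗ q, φ(a,b))`. -/
def dirProd {E C : Type*} (op : E → E → E) (phi : C → C → C)
    (z w : E × C) : E × C :=
  (op z.1 w.1, phi z.2 w.2)

/-- The direct product of two composite finite invertible loops `(E,∗)`
and `(C,φ)` of prime orders `k` and `m`, with closed subsets `Ē` (`1 < |Ē| < k`) and
`C̄` (`1 < |C̄| < m`), is non-Lagrangian: the subset `Ē × C̄` is closed under `⋄` and
its cardinality `|Ē|·|C̄|` does not divide `n = k·m`. -/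
theorem dirProd_nonLagrangian_of_composite_primes
    {E C : Type*} [Fintype E] [Fintype C]
    (op : E → E → E) (phi : C → C → C) (e₁ : E) (c₁ : C)
    (hEleft : ∀ a : E, Function.Bijective (fun x => op a x))
    (hEright : ∀ a : E, Function.Bijective (fun x => op x a))
    (hEone : ∀ x : E, op e₁ x = x ∧ op x e₁ = x)
    (hEinv : ∀ p : E, ∃ q : E, op p q = e₁ ∧ op q p = e₁)
    (hCleft : ∀ a : C, Function.Bijective (fun x => phi a x))
    (hCright : ∀ a : C, Function.Bijective (fun x => phi x a))
    (hCone : ∀ x : C, phi c₁ x = x ∧ phi x c₁ = x)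
    (hCinv : ∀ a : C, ∃ b : C, phi a b = c₁ ∧ phi b a = c₁)
    (hkprime : Nat.Prime (Fintype.card E))
    (hmprime : Nat.Prime (Fintype.card C))
    (Ebar : Finset E) (hEbarcl : ∀ a ∈ Ebar, ∀ b ∈ Ebar, op a b ∈ Ebar)
    (hEbarlt : 1 < Ebar.card) (hEbarub : Ebar.card < Fintype.card E)
    (Cbar : Finset C) (hCbarcl : ∀ a ∈ Cbar, ∀ b ∈ Cbar, phi a b ∈ Cbar)
    (hCbarlt : 1 < Cbar.card) (hCbarub : Cbar.card < Fintype.card C) :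
    Fintype.card (E × C) = Fintype.card E * Fintype.card C ∧
    (∀ z ∈ Ebar ×ˢ Cbar, ∀ w ∈ Ebar ×ˢ Cbar, dirProd op phi z w ∈ Ebar ×ˢ Cbar) ∧
    (Ebar ×ˢ Cbar).card = Ebar.card * Cbar.card ∧
    ¬ (Ebar.card * Cbar.card ∣ Fintype.card (E × C)) := by
  set k := Fintype.card E with hk
  set m := Fintype.card C with hm
  set a := Ebar.card with ha
  set b := Cbar.card with hb
  refine ⟨Fintype.card_prod E C, ?_, Finset.card_product _ _, ?_⟩
  · rintro ⟨z1, z2⟩ hz ⟨w1, w2⟩ hw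
    simp only [Finset.mem_product] at hz hw ⊢
    exact ⟨hEbarcl _ hz.1 _ hw.1, hCbarcl _ hz.2 _ hw.2⟩
  · rw [Fintype.card_prod]
    intro hdvd
    have ha0 : 0 < a := by omega
    have hb0 : 0 < b := by omega
    rcases (Nat.coprime_or_dvd_of_prime hkprime (a*b)).symm with hkd | hcop
    · -- k ∣ a * b
      obtain ⟨e, he⟩ := hkd
      have hk0 : 0 < k := hkprime.pos
      have hedvd : e ∣ m := by
        have : k * e ∣ k * m := he ▸ hdvd
        exact (mul_dvd_mul_iff_left (by omega : k ≠ 0)).mp this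
      rcases (Nat.Prime.eq_one_or_self_of_dvd hmprime e hedvd) with he1 | hem
      · -- a*b = k, prime
        rw [he1, mul_one] at he
        have := (Nat.Prime.eq_one_or_self_of_dvd hkprime a ⟨b, he.symm⟩)
        rcases this with h1 | h1
        · omega
        · nlinarith
      · -- a*b = k*m
        subst hem
        nlinarith
    · -- coprime ⇒ a*b ∣ m
      have habm : a * b ∣ m := (Nat.Coprime.dvd_of_dvd_mul_left hcop.symm hdvd)
      rcases (Nat.Prime.eq_one_or_self_of_dvd hmprime (a*b) habm) with h1 | h1
      · nlinarith
      · have := (Nat.Prime.eq_one_or_self_of_dvd hmprime b ⟨a, by linarith [h1]⟩)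
        rcases this with h2 | h2
        · omega
        · nlinarith
end
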